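/- A perfect path p in a monomial algebra Λ is elementary (a source in the Hasse quiver of (ℙ_Λ, ⪯)) if and only if p is a sink in the Hasse quiver of (ℙ_Λ, ≤); dually, p is co-elementary (a sink w.r.t. ⪯) if and only if p is a source in the Hasse quiver of (ℙ_Λ, ≤). -/

import Mathlib

/-! Combinatorial model of a monomial algebra `Λ = KQ/I`.

A finite quiver is given by source and target maps on a type of arrows.
A (nontrivial) path is encoded as a nonempty list of composable arrows;
the admissible monomial ideal `I` is encoded by its set `F` of minimal
generating paths, and a path is zero in `Λ` iff it contains a member of
`F` as a contiguous subpath (infix). -/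

/-- A quiver structure on arrow type `E` with vertex type `V`. -/
structure QuiverData (V E : Type) where
  src : E → V
  tgt : E → V

namespace QuiverData

variable {V E : Type} (Q : QuiverData V E)

/-- `l` is the list of arrows of a path of `Q`. -/
def IsPath (l : List E) : Prop := l.Chain' fun a b => Q.tgt a = Q.src b

/-- Two paths are composable: the target of the first equals the source of
the second (vacuously true if one of them is trivial). -/
def Composable (l m : List E) : Prop :=
  ∀ a ∈ l.getLast?, ∀ b ∈ m.head?, Q.tgt a = Q.src b

end QuiverData

/-- A monomial algebra, encoded combinatorially: a finite quiver together with
the set `F` of minimal paths generating the admissible monomial ideal `I`. -/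
structure MonomialData (V E : Type) extends QuiverData V E where
  F : Set (List E)
  F_path : ∀ f ∈ F, toQuiverData.IsPath f
  F_len : ∀ f ∈ F, 2 ≤ f.length
  F_min : ∀ f ∈ F, ∀ g, g <:+: f → (∃ f' ∈ F, f' <:+: g) → g = f
  admissible : ∃ N, ∀ l, toQuiverData.IsPath l → N ≤ l.length → ∃ f ∈ F, f <:+: l

namespace MonomialData

variable {V E : Type} (M : MonomialData V E)

/-- The path `l` is zero in `Λ`. -/
def IsZero (l : List E) : Prop := ∃ f ∈ M.F, f <:+: l

/-- `l` is a path which is nonzero in `Λ`. -/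
def Nonzero (l : List E) : Prop := M.toQuiverData.IsPath l ∧ ¬ M.IsZero l

/-- A perfect pair of nonzero nontrivial paths, after Chen–Shen–Zhou. -/
def PerfectPair (p q : List E) : Prop :=
  p ≠ [] ∧ q ≠ [] ∧ M.Nonzero p ∧ M.Nonzero q ∧
  M.toQuiverData.Composable p q ∧ M.IsZero (p ++ q) ∧
  (∀ q', q' ≠ [] → M.Nonzero q' → M.toQuiverData.Composable p q' →
      M.IsZero (p ++ q') → q <+: q') ∧
  (∀ p', p' ≠ [] → M.Nonzero p' → M.toQuiverData.Composable p' q →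
      M.IsZero (p' ++ q) → p <:+ p')

/-- A perfect path: a path appearing in a perfect path sequence
`(p₁, …, pₙ, pₙ₊₁ = p₁)`, encoded by a periodic sequence of paths each of
whose consecutive pairs is perfect. -/
def IsPerfect (p : List E) : Prop :=
  ∃ (n : ℕ) (s : ℕ → List E), 0 < n ∧ s 0 = p ∧ (∀ i, s (i + n) = s i) ∧
    ∀ i, M.PerfectPair (s i) (s (i + 1))

/-- `c` is the underlying cycle associated with the perfect path `p`:
the shortest cycle `c` with `p₁ ⋯ pₙ = cˡ` for some `l > 0`, for a perfect
path sequence through `p`. -/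
def IsUnderlyingCycleOf (c p : List E) : Prop :=
  ∃ (n : ℕ) (s : ℕ → List E), 0 < n ∧ s 0 = p ∧ (∀ i, s (i + n) = s i) ∧
    (∀ i, M.PerfectPair (s i) (s (i + 1))) ∧
    (∃ l, 0 < l ∧ ((List.range n).map s).flatten = (List.replicate l c).flatten) ∧
    (∀ c' l', 0 < l' → ((List.range n).map s).flatten = (List.replicate l' c').flatten →
      c.length ≤ c'.length)


/-- There is an overlap between the perfect paths `p` and `q` (`p` overlaps `q`). -/
def Overlap (p q : List E) : Prop :=
  ∃ x p' q' : List E, x ≠ [] ∧ p = p' ++ x ∧ q = x ++ q' ∧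
    M.Nonzero (p' ++ x ++ q') ∧ (p = q → p' ≠ [] ∧ q' ≠ [])

/-- An elementary perfect path: a source in the Hasse quiver of the left
divisibility order `⪯` on perfect paths, i.e. it is not a proper left divisor
of any perfect path. -/
def Elementary (p : List E) : Prop :=
  M.IsPerfect p ∧ ¬ ∃ q, M.IsPerfect q ∧ p <+: q ∧ p ≠ q

/-- A co-elementary perfect path: a sink in the Hasse quiver of `⪯`, i.e.
no proper left divisor of it is perfect. -/
def CoElementary (p : List E) : Prop :=
  M.IsPerfect p ∧ ¬ ∃ q, M.IsPerfect q ∧ q <+: p ∧ q ≠ p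

/-- There is an arrow `q ⟶ p` in the Hasse quiver of `(ℙ_Λ, ⪯)`:
`p ≺ q` and no perfect path lies strictly between them. -/
def HasseArrowPrec (q p : List E) : Prop :=
  M.IsPerfect p ∧ M.IsPerfect q ∧ p <+: q ∧ p ≠ q ∧
    ¬ ∃ r, M.IsPerfect r ∧ p <+: r ∧ p ≠ r ∧ r <+: q ∧ r ≠ q

end MonomialData

/-- Two cycles are equivalent (agree up to cyclic permutation): each is a
subpath of a power of the other. -/
def CyclesEquiv {E : Type} (c d : List E) : Prop :=
  ∃ m k, 0 < m ∧ 0 < k ∧ c <:+: (List.replicate m d).flatten ∧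
    d <:+: (List.replicate k c).flatten


/-! Let `(Pᵢ)` and `(Qᵢ)` be perfect sequences through `P₀ = p` and `Q₀ = p u`, `u ≠ []`.
Extending the first member of a perfect pair by `u` on the right removes `u` from the front of
its partner, and extending it on the left strictly shortens its partner on the right. Hence the
two sequences alternate, `Q₂ₖ = P₂ₖ wₖ` and `P₂ₖ₊₁ = wₖ Q₂ₖ₊₁` with `w₀ = u` and `wₖ ≠ []`.
Regluing, `w₀, Q₁ P₂, w₁, Q₃ P₄, …` is again a perfect sequence, so `u` is perfect and `p` has
the proper perfect left extension `Q₋₁ p`. Applying this to `Λ` and to `Λᵒᵖ` turns proper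
perfect right extensions of `p` into left ones and proper perfect prefixes into suffixes, and
conversely. -/

theorem List.suffix_append_cases {α : Type*} {s a b : List α} (h : s <:+ a ++ b) :
    s <:+ b ∨ ∃ e, e ≠ [] ∧ e <:+ a ∧ s = e ++ b := by
  obtain ⟨t, h⟩ := h
  rcases List.append_eq_append_iff.1 h with ⟨e, rfl, rfl⟩ | ⟨c, -, rfl⟩
  · rcases eq_or_ne e [] with rfl | he
    · exact .inl (List.suffix_refl b)
    · exact .inr ⟨e, he, List.suffix_append t e, rfl⟩
  · exact .inl (List.suffix_append c s)

namespace QuiverData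

variable {V E : Type} (Q : QuiverData V E) {k l m : List E}

theorem composable_of_isPath_append (h : Q.IsPath (l ++ m)) : Q.Composable l m :=
  (List.isChain_append.1 h).2.2

theorem composable_append_left_iff (hl : l ≠ []) :
    Q.Composable (k ++ l) m ↔ Q.Composable l m := by
  rw [Composable, Composable, List.getLast?_append_of_ne_nil _ hl]

theorem composable_append_right_iff (hm : m ≠ []) :
    Q.Composable l (m ++ k) ↔ Q.Composable l m := by
  rw [Composable, Composable, List.head?_append_of_ne_nil _ hm]

def reverse : QuiverData V E := ⟨Q.tgt, Q.src⟩

theorem isPath_reverse_iff : Q.reverse.IsPath l ↔ Q.IsPath l.reverse := by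
  change List.IsChain _ l ↔ List.IsChain _ l.reverse
  simp only [List.isChain_reverse, reverse, eq_comm]

theorem composable_reverse_iff :
    Q.reverse.Composable l m ↔ Q.Composable m.reverse l.reverse := by
  simp only [Composable, reverse, List.getLast?_reverse, List.head?_reverse]
  exact ⟨fun h a ha b hb => (h b hb a ha).symm, fun h a ha b hb => (h b hb a ha).symm⟩

end QuiverData

namespace MonomialData

variable {V E : Type} {M : MonomialData V E} {a b c d f p q u l m : List E}

theorem IsZero.mono (h : M.IsZero l) (hl : l <:+: m) : M.IsZero m :=
  let ⟨f, hf, hfl⟩ := h; ⟨f, hf, hfl.trans hl⟩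

theorem Nonzero.infix (h : M.Nonzero m) (hl : l <:+: m) : M.Nonzero l :=
  ⟨h.1.infix hl, fun hz => h.2 (hz.mono hl)⟩

theorem nonzero_of_infix_mem_F (hf : f ∈ M.F) (hl : l <:+: f) (hne : l ≠ f) : M.Nonzero l :=
  ⟨(M.F_path f hf).infix hl, fun ⟨_, hf', hf'l⟩ => hne (M.F_min f hf l hl ⟨_, hf', hf'l⟩)⟩

theorem nonzero_left_of_append_mem_F (h : l ++ m ∈ M.F) (hm : m ≠ []) : M.Nonzero l :=
  nonzero_of_infix_mem_F h (List.prefix_append l m).isInfix (by simpa using hm.symm)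

theorem nonzero_right_of_append_mem_F (h : l ++ m ∈ M.F) (hl : l ≠ []) : M.Nonzero m :=
  nonzero_of_infix_mem_F h (List.suffix_append l m).isInfix (by simpa using hl.symm)

theorem IsZero.exists_straddle (h : M.IsZero (l ++ m)) (hl : ¬ M.IsZero l)
    (hm : ¬ M.IsZero m) : ∃ s y, s ≠ [] ∧ y ≠ [] ∧ s <:+ l ∧ y <+: m ∧ s ++ y ∈ M.F := by
  obtain ⟨f, hf, hflm⟩ := h
  rcases List.infix_append_iff.1 hflm with hfl | hfm | ⟨s, y, rfl, hs, hy⟩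
  · exact absurd ⟨f, hf, hfl⟩ hl
  · exact absurd ⟨f, hf, hfm⟩ hm
  · refine ⟨s, y, ?_, ?_, hs, hy, hf⟩
    · rintro rfl
      exact hm ⟨y, hf, hy.isInfix⟩
    · rintro rfl
      exact hl ⟨s, by simpa using hf, hs.isInfix⟩

namespace PerfectPair

theorem left_ne_nil (h : M.PerfectPair a b) : a ≠ [] := h.1
theorem right_ne_nil (h : M.PerfectPair a b) : b ≠ [] := h.2.1
theorem nonzero_left (h : M.PerfectPair a b) : M.Nonzero a := h.2.2.1
theorem nonzero_right (h : M.PerfectPair a b) : M.Nonzero b := h.2.2.2.1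
theorem composable (h : M.PerfectPair a b) : M.Composable a b := h.2.2.2.2.1
theorem isZero (h : M.PerfectPair a b) : M.IsZero (a ++ b) := h.2.2.2.2.2.1

theorem prefix_of_isZero (h : M.PerfectPair a b) (hq : q ≠ []) (hnz : M.Nonzero q)
    (hc : M.Composable a q) (hz : M.IsZero (a ++ q)) : b <+: q :=
  h.2.2.2.2.2.2.1 q hq hnz hc hz

theorem suffix_of_isZero (h : M.PerfectPair a b) (hp : p ≠ []) (hnz : M.Nonzero p)
    (hc : M.Composable p b) (hz : M.IsZero (p ++ b)) : a <:+ p :=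
  h.2.2.2.2.2.2.2 p hp hnz hc hz

theorem append_mem_F (h : M.PerfectPair a b) : a ++ b ∈ M.F := by
  obtain ⟨s, y, hs, hy, ⟨t, rfl⟩, hyb, hF⟩ :=
    h.isZero.exists_straddle h.nonzero_left.2 h.nonzero_right.2
  have hsy : M.Composable s y := M.composable_of_isPath_append (M.F_path _ hF)
  obtain rfl : y = b := antisymm hyb <| h.prefix_of_isZero hy (h.nonzero_right.infix hyb.isInfix)
    ((M.composable_append_left_iff hs).2 hsy) ⟨_, hF, ⟨t, [], by simp⟩⟩
  have hts : t ++ s = s := antisymm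
    (h.suffix_of_isZero hs (nonzero_left_of_append_mem_F hF hy) hsy ⟨_, hF, List.infix_rfl⟩)
    (List.suffix_append t s)
  rwa [hts]

theorem left_unique (h : M.PerfectPair a b) (h' : M.PerfectPair c b) : a = c :=
  antisymm (h.suffix_of_isZero h'.left_ne_nil h'.nonzero_left h'.composable h'.isZero)
    (h'.suffix_of_isZero h.left_ne_nil h.nonzero_left h.composable h.isZero)

theorem right_eq_append_of_left_append (h : M.PerfectPair a b) (hq : M.PerfectPair (a ++ u) d)
    (hu : u ≠ []) : b = u ++ d := by
  have hab : a ++ b ∈ M.F := h.append_mem_F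
  have hbud : b <+: u ++ d := h.prefix_of_isZero (by simp [hu])
    (nonzero_right_of_append_mem_F (by simpa using hq.append_mem_F) h.left_ne_nil)
    ((M.composable_append_right_iff hu).2 (M.composable_of_isPath_append hq.nonzero_left.1))
    ⟨_, hq.append_mem_F, by simp⟩
  have hbu : ¬ b <+: u := fun hbu =>
    hq.nonzero_left.2 ⟨_, hab, (List.prefix_append_right_inj a).2 hbu |>.isInfix⟩
  obtain ⟨v, rfl⟩ :=
    (List.prefix_or_prefix_of_prefix hbud (List.prefix_append u d)).resolve_left hbu
  have hv : v ≠ [] := by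
    rintro rfl
    exact hbu (by simp)
  have hvd : v <+: d := (List.prefix_append_right_inj u).1 hbud
  rw [antisymm hvd <| hq.prefix_of_isZero hv (hq.nonzero_right.infix hvd.isInfix)
    ((M.composable_append_left_iff hu).2 (M.composable_of_isPath_append h.nonzero_right.1))
    ⟨_, hab, by simp⟩]

theorem exists_right_append_of_append_left (h : M.PerfectPair (u ++ a) b)
    (h' : M.PerfectPair a c) (hu : u ≠ []) : ∃ w, w ≠ [] ∧ c = b ++ w := by
  obtain ⟨w, rfl⟩ : b <+: c := h.prefix_of_isZero h'.right_ne_nil h'.nonzero_right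
    ((M.composable_append_left_iff h'.left_ne_nil).2 h'.composable)
    ⟨_, h'.append_mem_F, ⟨u, [], by simp⟩⟩
  refine ⟨w, ?_, rfl⟩
  rintro rfl
  rw [List.append_nil] at h'
  exact hu (by simpa using h.left_unique h')

end PerfectPair

theorem PerfectPair.glue_prefix_of_isZero (ha : M.PerfectPair a (p ++ u))
    (hp : M.PerfectPair p c) (huc : u <+: c) (hu : u ≠ []) (hq : q ≠ []) (hnz : M.Nonzero q)
    (hc : M.Composable (a ++ p) q) (hz : M.IsZero (a ++ p ++ q)) : u <+: q := by
  obtain ⟨s, y, hs, hy, hsap, hyq, hF⟩ := hz.exists_straddle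
    (nonzero_left_of_append_mem_F (by simpa using ha.append_mem_F) hu).2 hnz.2
  rcases List.suffix_append_cases hsap with hsp | ⟨e, he, ⟨t, rfl⟩, rfl⟩
  · refine huc.trans <| hp.prefix_of_isZero hq hnz
      ((M.composable_append_left_iff hp.left_ne_nil).1 hc)
      ⟨_, hF, List.infix_append_iff.2 (.inr (.inr ⟨s, y, rfl, hsp, hyq⟩))⟩
  · rw [List.append_assoc] at hF
    have hpy : p ++ u <+: p ++ y := ha.prefix_of_isZero (by simp [hp.left_ne_nil])
      (nonzero_right_of_append_mem_F hF he)
      ((M.composable_append_left_iff he).2 (M.composable_of_isPath_append (M.F_path _ hF)))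
      ⟨_, hF, ⟨t, [], by simp⟩⟩
    exact ((List.prefix_append_right_inj p).1 hpy).trans hyq

theorem PerfectPair.glue_suffix_of_isZero (ha : M.PerfectPair a (p ++ u))
    (hp : M.PerfectPair p c) (huc : u <+: c) (hnz : M.Nonzero l) (hz : M.IsZero (l ++ u)) :
    a ++ p <:+ l := by
  have hunz : M.Nonzero u := ha.nonzero_right.infix (List.suffix_append p u).isInfix
  obtain ⟨s, y, hs, hy, hsl, hyu, hF⟩ := hz.exists_straddle hnz.2 hunz.2
  obtain ⟨w, rfl⟩ := hyu.trans huc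
  obtain ⟨z, rfl⟩ : p <:+ s := hp.suffix_of_isZero hs (nonzero_left_of_append_mem_F hF hy)
    ((M.composable_append_right_iff hy).2 (M.composable_of_isPath_append (M.F_path _ hF)))
    ⟨_, hF, ⟨[], w, by simp⟩⟩
  rw [List.append_assoc] at hF
  have hz : z ≠ [] := by
    rintro rfl
    exact ha.nonzero_right.2 ⟨_, hF, (List.prefix_append_right_inj p).2 hyu |>.isInfix⟩
  have hzp : M.Composable z p := (M.composable_append_right_iff hp.left_ne_nil).1
    (M.composable_of_isPath_append (M.F_path _ hF))
  have haz : a <:+ z := ha.suffix_of_isZero hz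
    (nonzero_left_of_append_mem_F hF (by simp [hp.left_ne_nil]))
    ((M.composable_append_right_iff hp.left_ne_nil).2 hzp)
    ⟨_, hF, List.infix_append_iff.2 (.inr (.inr ⟨z, p ++ y, rfl, List.suffix_rfl,
      (List.prefix_append_right_inj p).2 hyu⟩))⟩
  obtain ⟨t, rfl⟩ := haz
  exact List.IsSuffix.trans ⟨t, by simp⟩ hsl

theorem PerfectPair.append_glue (ha : M.PerfectPair a (p ++ u)) (hp : M.PerfectPair p c)
    (hq : M.PerfectPair (p ++ u) d) (hu : u ≠ []) : M.PerfectPair (a ++ p) u := by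
  have huc : u <+: c := hp.right_eq_append_of_left_append hq hu ▸ List.prefix_append u d
  have haF : a ++ p ++ u ∈ M.F := by simpa using ha.append_mem_F
  exact ⟨by simp [ha.left_ne_nil], hu, nonzero_left_of_append_mem_F haF hu,
    ha.nonzero_right.infix (List.suffix_append p u).isInfix,
    M.composable_of_isPath_append (M.F_path _ haF), ⟨_, haF, List.infix_rfl⟩,
    fun _ hq hnz hc hz => ha.glue_prefix_of_isZero hp huc hu hq hnz hc hz,
    fun _ _ hnz _ hz => ha.glue_suffix_of_isZero hp huc hnz hz⟩

/-- The opposite algebra `Λᵒᵖ`. -/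
def reverse (M : MonomialData V E) : MonomialData V E where
  toQuiverData := M.toQuiverData.reverse
  F := {l | l.reverse ∈ M.F}
  F_path _ hf := M.isPath_reverse_iff.2 (M.F_path _ hf)
  F_len _ hf := by simpa using M.F_len _ hf
  F_min _ hf _ hg := fun ⟨_, hf', hf'g⟩ => List.reverse_injective <|
    M.F_min _ hf _ (List.reverse_infix.2 hg) ⟨_, hf', List.reverse_infix.2 hf'g⟩
  admissible := by
    obtain ⟨N, hN⟩ := M.admissible
    refine ⟨N, fun l hl hlen => ?_⟩
    obtain ⟨f, hf, hfl⟩ := hN l.reverse (M.isPath_reverse_iff.1 hl) (by simpa using hlen)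
    exact ⟨f.reverse, by simpa using hf, by simpa using List.reverse_infix.2 hfl⟩

@[simp]
theorem reverse_reverse (M : MonomialData V E) : M.reverse.reverse = M := by
  rcases M with ⟨⟨src, tgt⟩, F, _, _, _, _⟩
  simp [reverse, QuiverData.reverse]

theorem isZero_reverse_iff : M.reverse.IsZero l ↔ M.IsZero l.reverse := by
  constructor
  · rintro ⟨f, hf, hfl⟩
    exact ⟨f.reverse, hf, List.reverse_infix.2 hfl⟩
  · rintro ⟨f, hf, hfl⟩
    exact ⟨f.reverse, by simpa [reverse] using hf, by simpa using List.reverse_infix.2 hfl⟩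

theorem isPath_reverse_iff : M.reverse.IsPath l ↔ M.IsPath l.reverse :=
  M.toQuiverData.isPath_reverse_iff

theorem composable_reverse_iff :
    M.reverse.Composable l m ↔ M.Composable m.reverse l.reverse :=
  M.toQuiverData.composable_reverse_iff

theorem nonzero_reverse_iff : M.reverse.Nonzero l ↔ M.Nonzero l.reverse :=
  and_congr isPath_reverse_iff (not_congr isZero_reverse_iff)

theorem PerfectPair.reverse (h : M.PerfectPair a b) :
    M.reverse.PerfectPair b.reverse a.reverse := by
  refine ⟨by simpa using h.right_ne_nil, by simpa using h.left_ne_nil,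
    nonzero_reverse_iff.2 (by simpa using h.nonzero_right),
    nonzero_reverse_iff.2 (by simpa using h.nonzero_left),
    composable_reverse_iff.2 (by simpa using h.composable),
    isZero_reverse_iff.2 (by simpa using h.isZero), fun q hq hnz hc hz => ?_,
    fun p hp hnz hc hz => ?_⟩
  · rw [nonzero_reverse_iff] at hnz
    rw [composable_reverse_iff, List.reverse_reverse] at hc
    rw [isZero_reverse_iff, List.reverse_append, List.reverse_reverse] at hz
    simpa using List.reverse_prefix.2 (h.suffix_of_isZero (by simpa using hq) hnz hc hz)
  · rw [nonzero_reverse_iff] at hnz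
    rw [composable_reverse_iff, List.reverse_reverse] at hc
    rw [isZero_reverse_iff, List.reverse_append, List.reverse_reverse] at hz
    simpa using List.reverse_suffix.2 (h.prefix_of_isZero (by simpa using hp) hnz hc hz)

theorem perfectPair_reverse_iff :
    M.reverse.PerfectPair a b ↔ M.PerfectPair b.reverse a.reverse :=
  ⟨fun h => by simpa using h.reverse, fun h => by simpa using h.reverse⟩

theorem PerfectPair.glue_append (h₀ : M.PerfectPair a b) (h₁ : M.PerfectPair c (u ++ b))
    (h₂ : M.PerfectPair (u ++ b) d) (hu : u ≠ []) : M.PerfectPair u (b ++ d) := by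
  have h := PerfectPair.append_glue (by simpa using h₂.reverse) h₀.reverse
    (by simpa using h₁.reverse) (by simpa using hu)
  simpa using perfectPair_reverse_iff.1 h

theorem IsPerfect.ne_nil (h : M.IsPerfect p) : p ≠ [] :=
  let ⟨_, _, _, h₀, _, hpair⟩ := h; h₀ ▸ (hpair 0).left_ne_nil

theorem isPerfect_of_periodic {s : ℕ → List E} {n : ℕ} (hn : 0 < n)
    (hs : Function.Periodic s n) (hpair : ∀ i, M.PerfectPair (s i) (s (i + 1))) (j : ℕ) :
    M.IsPerfect (s j) :=
  ⟨n, fun i => s (i + j), hn, by simp, fun i => by simpa [add_right_comm] using hs (i + j),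
    fun i => by simpa [add_right_comm] using hpair (i + j)⟩

/-- Read backwards, `s` runs through the indices `(n - 1) * i ≡ -i (mod n)`. -/
theorem IsPerfect.reverse (h : M.IsPerfect p) : M.reverse.IsPerfect p.reverse := by
  obtain ⟨n, s, hn, rfl, hs, hpair⟩ := h
  replace hs : Function.Periodic s n := hs
  have hs' : Function.Periodic (fun i => (s ((n - 1) * i)).reverse) n := fun i => by
    simpa [mul_add] using congrArg List.reverse (hs.nat_mul (n - 1) ((n - 1) * i))
  have hpair' : ∀ i, M.reverse.PerfectPair (s ((n - 1) * i)).reverse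
      (s ((n - 1) * (i + 1))).reverse := fun i => by
    have hi : (n - 1) * (i + 1) + 1 = (n - 1) * i + n := by rw [mul_add, mul_one]; omega
    simpa [perfectPair_reverse_iff, hi, hs _] using hpair ((n - 1) * (i + 1))
  simpa using isPerfect_of_periodic hn hs' hpair' 0

theorem isPerfect_reverse_iff : M.reverse.IsPerfect l ↔ M.IsPerfect l.reverse :=
  ⟨fun h => by simpa using h.reverse, fun h => by simpa using h.reverse⟩

theorem isPerfect_of_alternating {w v : ℕ → List E} {N : ℕ} (hN : 0 < N)
    (hw : Function.Periodic w N) (hv : Function.Periodic v N)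
    (hwv : ∀ k, M.PerfectPair (w k) (v k)) (hvw : ∀ k, M.PerfectPair (v k) (w (k + 1))) :
    (∀ k, M.IsPerfect (w k)) ∧ ∀ k, M.IsPerfect (v k) := by
  set r := Stream'.interleave w v
  have hr_even (k : ℕ) : r.get (2 * k) = w k := Stream'.get_interleave_left k w v
  have hr_odd (k : ℕ) : r.get (2 * k + 1) = v k := Stream'.get_interleave_right k w v
  have hr (i : ℕ) : M.PerfectPair (r.get i) (r.get (i + 1)) := by
    obtain ⟨k, rfl | rfl⟩ := Nat.even_or_odd' i
    · rw [hr_even, hr_odd]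
      exact hwv k
    · rw [hr_odd, show 2 * k + 1 + 1 = 2 * (k + 1) by ring, hr_even]
      exact hvw k
  have hper : Function.Periodic r.get (2 * N) := by
    intro i
    obtain ⟨k, rfl | rfl⟩ := Nat.even_or_odd' i
    · rw [← mul_add, hr_even, hr_even, hw]
    · rw [show 2 * k + 1 + 2 * N = 2 * (k + N) + 1 by ring, hr_odd, hr_odd, hv]
  exact ⟨fun k => hr_even k ▸ isPerfect_of_periodic (by omega) hper hr (2 * k),
    fun k => hr_odd k ▸ isPerfect_of_periodic (by omega) hper hr (2 * k + 1)⟩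

section Alternating

variable {P Q : ℕ → List E}

theorem exists_alternating_append (hP : ∀ i, M.PerfectPair (P i) (P (i + 1)))
    (hQ : ∀ i, M.PerfectPair (Q i) (Q (i + 1))) (hu : u ≠ []) (h₀ : Q 0 = P 0 ++ u) :
    ∀ k, ∃ w, w ≠ [] ∧ Q (2 * k) = P (2 * k) ++ w ∧ P (2 * k + 1) = w ++ Q (2 * k + 1) := by
  have step (i : ℕ) (w : List E) (hw : w ≠ []) (h : Q i = P i ++ w) :
      P (i + 1) = w ++ Q (i + 1) :=
    (hP i).right_eq_append_of_left_append (h ▸ hQ i) hw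
  intro k
  induction k with
  | zero => exact ⟨u, hu, h₀, step 0 u hu h₀⟩
  | succ k ih =>
    obtain ⟨w, hw, -, h⟩ := ih
    obtain ⟨w', hw', h'⟩ :=
      (h ▸ hP (2 * k + 1)).exists_right_append_of_append_left (hQ (2 * k + 1)) hw
    exact ⟨w', hw', h', step _ w' hw' h'⟩

theorem perfectPair_alternating (hP : ∀ i, M.PerfectPair (P i) (P (i + 1)))
    (hQ : ∀ i, M.PerfectPair (Q i) (Q (i + 1))) {w : ℕ → List E} (hw : ∀ k, w k ≠ [])
    (hwQ : ∀ k, Q (2 * k) = P (2 * k) ++ w k) (hwP : ∀ k, P (2 * k + 1) = w k ++ Q (2 * k + 1))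
    (k : ℕ) : M.PerfectPair (w k) (Q (2 * k + 1) ++ P (2 * k + 2)) ∧
      M.PerfectPair (Q (2 * k + 1) ++ P (2 * k + 2)) (w (k + 1)) := by
  have hwQ' : Q (2 * k + 2) = P (2 * k + 2) ++ w (k + 1) := hwQ (k + 1)
  exact ⟨(hQ (2 * k)).glue_append (hwP k ▸ hP (2 * k)) (hwP k ▸ hP (2 * k + 1)) (hw k),
    (hwQ' ▸ hQ (2 * k + 1)).append_glue (hP (2 * k + 2)) (hwQ' ▸ hQ (2 * k + 2)) (hw (k + 1))⟩

end Alternating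

theorem IsPerfect.exists_of_append (hp : M.IsPerfect p) (hq : M.IsPerfect (p ++ u))
    (hu : u ≠ []) : (∃ a, a ≠ [] ∧ M.IsPerfect (a ++ p)) ∧ M.IsPerfect u := by
  obtain ⟨n₁, P, hn₁, rfl, hP, hPpair⟩ := hp
  obtain ⟨n₂, Q, hn₂, hQ₀, hQ, hQpair⟩ := hq
  set N := n₁ * n₂
  have hN : 0 < N := Nat.mul_pos hn₁ hn₂
  replace hP : Function.Periodic P (2 * N) := by
    simpa only [Nat.cast_id, show 2 * n₂ * n₁ = 2 * N by ring]
      using Function.Periodic.nat_mul hP (2 * n₂)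
  replace hQ : Function.Periodic Q (2 * N) := by
    simpa only [Nat.cast_id, show 2 * n₁ * n₂ = 2 * N by ring]
      using Function.Periodic.nat_mul hQ (2 * n₁)
  choose w hw hwQ hwP using exists_alternating_append hPpair hQpair hu hQ₀
  have hw_per : Function.Periodic w N := fun k => by
    have h := hwQ (k + N)
    rw [mul_add, hP, hQ, hwQ k] at h
    exact (List.append_cancel_left h).symm
  have hv_per : Function.Periodic (fun k => Q (2 * k + 1) ++ P (2 * k + 2)) N := fun k => by
    simp only [mul_add, add_right_comm _ (2 * N)]
    rw [hP, hQ]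
  obtain ⟨hw_perf, hv_perf⟩ := isPerfect_of_alternating hN hw_per hv_per
    (fun k => (perfectPair_alternating hPpair hQpair hw hwQ hwP k).1)
    (fun k => (perfectPair_alternating hPpair hQpair hw hwQ hwP k).2)
  refine ⟨⟨Q (2 * (N - 1) + 1), (hQpair _).left_ne_nil, ?_⟩, ?_⟩
  · simpa only [show 2 * (N - 1) + 2 = 0 + 2 * N by omega, hP 0] using hv_perf (N - 1)
  · exact List.append_cancel_left ((hwQ 0).symm.trans hQ₀) ▸ hw_perf 0

theorem IsPerfect.exists_right_extension_iff_left (hp : M.IsPerfect p) :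
    (∃ q, M.IsPerfect q ∧ p <+: q ∧ p ≠ q) ↔ ∃ q, M.IsPerfect q ∧ p <:+ q ∧ q ≠ p := by
  constructor
  · rintro ⟨_, hq, ⟨u, rfl⟩, hne⟩
    obtain ⟨⟨a, ha, hap⟩, -⟩ := hp.exists_of_append hq (by simpa using hne)
    exact ⟨a ++ p, hap, List.suffix_append a p, by simpa using ha⟩
  · rintro ⟨_, hq, ⟨v, rfl⟩, hne⟩
    obtain ⟨⟨a, ha, hap⟩, -⟩ :=
      hp.reverse.exists_of_append (by simpa using hq.reverse) (by simpa using hne)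
    exact ⟨p ++ a.reverse, by simpa using isPerfect_reverse_iff.1 hap, List.prefix_append p _,
      by simpa using ha⟩

theorem IsPerfect.exists_prefix_iff_suffix (hp : M.IsPerfect p) :
    (∃ q, M.IsPerfect q ∧ q <+: p ∧ q ≠ p) ↔ ∃ q, M.IsPerfect q ∧ q <:+ p ∧ q ≠ p := by
  constructor
  · rintro ⟨q, hq, ⟨u, rfl⟩, hne⟩
    exact ⟨u, (hq.exists_of_append hp (by simpa using hne)).2, List.suffix_append q u,
      by simpa using hq.ne_nil⟩
  · rintro ⟨q, hq, ⟨v, rfl⟩, hne⟩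
    have hv := (hq.reverse.exists_of_append (by simpa using hp.reverse) (by simpa using hne)).2
    exact ⟨v, by simpa using isPerfect_reverse_iff.1 hv, List.prefix_append v q,
      by simpa using hq.ne_nil⟩

end MonomialData

/-- a perfect path `p` is elementary iff it is a sink for the
order `≤` (no perfect `q` with `q < p`, i.e. no perfect path has `p` as a
proper right divisor), and co-elementary iff it is a source for `≤`
(no perfect `q` with `p < q`, i.e. no proper right divisor of `p` is perfect). -/
theorem elementary_iff_sink_le {V E : Type} (M : MonomialData V E)
    (p : List E) (hp : M.IsPerfect p) :
    (M.Elementary p ↔ ¬ ∃ q, M.IsPerfect q ∧ p <:+ q ∧ q ≠ p) ∧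
    (M.CoElementary p ↔ ¬ ∃ q, M.IsPerfect q ∧ q <:+ p ∧ q ≠ p) := by
  rw [MonomialData.Elementary, MonomialData.CoElementary, hp.exists_right_extension_iff_left,
    hp.exists_prefix_iff_suffix]
  exact ⟨and_iff_right hp, and_iff_right hp⟩
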